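/- arXiv:gr-qc/0406084 — 2 statements merged into one kernel-verified Lean document; each statement's English description precedes it below -/
import Mathlib

section
/- Let U ⊆ ℝ² be an open set containing the origin and let f : ℝ² → ℝ be continuous on U. Suppose that on each of the four open quadrants Q_I, Q_II, Q_III, Q_IV the partial derivative ∂f/∂x exists at every point of Q ∩ U, and that for each quadrant Q there is a continuous function g_Q : ℝ² → ℝ defined (and continuous) on (closure Q) ∩ U which agrees with ∂f/∂x on Q ∩ U. Then the jump of ∂f/∂x across the y-axis is continuous through the origin, i.e. g_I(0,0) − g_II(0,0) = g_IV(0,0) − g_III(0,0) ("jump of the jump vanishes"). -/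
/-!
The right derivative of `x ↦ f (x, 0)` at `0` can be computed from either quadrant adjacent to
the positive `x`-axis. By the mean value theorem, a difference quotient of `f (·, y)` on `[0, b]`
is a value of `g_Q` near the origin, hence close to `g_Q (0, 0)`; letting `y → 0` with `b` fixed
only uses the continuity of `f`. So `g_I (0, 0) = g_IV (0, 0)`, and likewise on the left
`g_II (0, 0) = g_III (0, 0)`.
-/

open Set Filter Topology Metric

theorem exists_hasDerivAt_eq_slope_uIoo {φ φ' : ℝ → ℝ} {a b : ℝ} (hab : a ≠ b)
    (hφ : ContinuousOn φ (uIcc a b)) (hφ' : ∀ x ∈ uIoo a b, HasDerivAt φ (φ' x) x) :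
    ∃ c ∈ uIoo a b, φ' c = slope φ a b := by
  rcases hab.lt_or_gt with hab | hba
  · rw [uIcc_of_lt hab] at hφ
    rw [uIoo_of_lt hab] at hφ' ⊢
    simpa only [slope_def_field] using exists_hasDerivAt_eq_slope φ φ' hab hφ hφ'
  · rw [uIcc_of_gt hba] at hφ
    rw [uIoo_of_gt hba] at hφ' ⊢
    simpa only [slope_comm φ a, slope_def_field] using exists_hasDerivAt_eq_slope φ φ' hba hφ hφ'

theorem ContinuousOn.continuousWithinAt_of_mem_closure {X Y : Type*} [TopologicalSpace X]
    [TopologicalSpace Y] {g : X → Y} {Q U : Set X} {x : X} (hg : ContinuousOn g (closure Q ∩ U))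
    (hU : U ∈ 𝓝 x) (hx : x ∈ closure Q) : ContinuousWithinAt g Q x :=
  (hg x ⟨hx, mem_of_mem_nhds hU⟩).mono_of_mem_nhdsWithin
    (inter_mem (mem_of_superset self_mem_nhdsWithin subset_closure) (mem_nhdsWithin_of_mem_nhds hU))

theorem mk_mem_ball_zero {x y r : ℝ} (hx : |x| < r) (hy : |y| < r) :
    ((x, y) : ℝ × ℝ) ∈ ball 0 r :=
  mem_ball_zero_iff.2 (max_lt hx hy)

theorem uIoo_subset_Ioi {α : Type*} [LinearOrder α] {a b : α} (hab : a < b) :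
    uIoo a b ⊆ Ioi a := by
  rw [uIoo_of_lt hab]
  exact Ioo_subset_Ioi_self

theorem uIoo_subset_Iio {α : Type*} [LinearOrder α] {a b : α} (hba : b < a) :
    uIoo a b ⊆ Iio a := by
  rw [uIoo_of_gt hba]
  exact Ioo_subset_Iio_self

section QuadrantSlope

variable {f g : ℝ × ℝ → ℝ} {U : Set (ℝ × ℝ)} {s t : Set ℝ}

theorem exists_forall_abs_slope_sub_lt (hU : U ∈ 𝓝 0) (hf : ContinuousOn f U)
    (hs : ∀ b ∈ s, uIoo 0 b ⊆ s) (hg : ContinuousWithinAt g (s ×ˢ t) 0)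
    (hd : ∀ p ∈ s ×ˢ t ∩ U, HasDerivAt (fun x => f (x, p.2)) (g p) p.1) {ε : ℝ} (hε : 0 < ε) :
    ∃ δ > 0, ball 0 δ ⊆ U ∧ ∀ b ∈ s, b ≠ 0 → |b| < δ → ∀ y ∈ t, |y| < δ →
      |slope (fun x => f (x, y)) 0 b - g 0| < ε := by
  obtain ⟨r, hr, hrU⟩ := Metric.mem_nhds_iff.1 hU
  obtain ⟨η, hη, hgη⟩ := Metric.continuousWithinAt_iff.1 hg ε hε
  have hδU : ball (0 : ℝ × ℝ) (min r η) ⊆ U := (ball_subset_ball (min_le_left _ _)).trans hrU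
  refine ⟨min r η, lt_min hr hη, hδU, ?_⟩
  intro b hb hb0 hbδ y hy hyδ
  have hsegment : ∀ x ∈ uIcc 0 b, ((x, y) : ℝ × ℝ) ∈ ball 0 (min r η) := by
    intro x hx
    have hxb : |x| ≤ |b| := by simpa using abs_sub_left_of_mem_uIcc hx
    exact mk_mem_ball_zero (hxb.trans_lt hbδ) hyδ
  obtain ⟨ξ, hξ, hslope⟩ := exists_hasDerivAt_eq_slope_uIoo (φ := fun x => f (x, y)) (Ne.symm hb0)
    (hf.comp (by fun_prop) fun x hx => hδU (hsegment x hx))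
    (fun x hx => hd (x, y) ⟨⟨hs b hb hx, hy⟩, hδU (hsegment x (uIoo_subset_uIcc_self hx))⟩)
  rw [← hslope, ← Real.dist_eq]
  refine hgη ⟨hs b hb hξ, hy⟩ ?_
  exact mem_ball.1 (ball_subset_ball (min_le_right _ _) (hsegment ξ (uIoo_subset_uIcc_self hξ)))

theorem hasDerivWithinAt_of_continuousOn_closure_prod [(𝓝[s] (0 : ℝ)).NeBot]
    [(𝓝[t] (0 : ℝ)).NeBot] (hU : U ∈ 𝓝 0) (hf : ContinuousOn f U) (hs : ∀ b ∈ s, uIoo 0 b ⊆ s)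
    (hg : ContinuousOn g (closure (s ×ˢ t) ∩ U))
    (hd : ∀ p ∈ s ×ˢ t ∩ U, HasDerivAt (fun x => f (x, p.2)) (g p) p.1) :
    HasDerivWithinAt (fun x => f (x, 0)) (g 0) s 0 := by
  have h0 : (0 : ℝ × ℝ) ∈ closure (s ×ˢ t) := by
    rw [closure_prod_eq]
    exact ⟨mem_closure_iff_nhdsWithin_neBot.2 ‹_›, mem_closure_iff_nhdsWithin_neBot.2 ‹_›⟩
  rw [hasDerivWithinAt_iff_tendsto_slope, Metric.tendsto_nhdsWithin_nhds]
  intro ε hε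
  obtain ⟨δ, hδ, hδU, hslope⟩ := exists_forall_abs_slope_sub_lt hU hf hs
    (hg.continuousWithinAt_of_mem_closure hU h0) hd (half_pos hε)
  refine ⟨δ, hδ, fun b ⟨hb, hb0⟩ hbδ => ?_⟩
  rw [Real.dist_eq, sub_zero] at hbδ
  have h0δ : |(0 : ℝ)| < δ := by simpa using hδ
  have hcont : ∀ c, |c| < δ → ContinuousAt (fun y => f (c, y)) 0 := fun c hc =>
    (hf.continuousAt (mem_of_superset (isOpen_ball.mem_nhds (mk_mem_ball_zero hc h0δ)) hδU)).comp
      (by fun_prop)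
  have hlim : Tendsto (fun y => slope (fun x => f (x, y)) 0 b) (𝓝[t] 0)
      (𝓝 (slope (fun x => f (x, 0)) 0 b)) := by
    simp only [slope_def_field]
    exact (((hcont b hbδ).sub (hcont 0 h0δ)).div_const _).tendsto.mono_left nhdsWithin_le_nhds
  have hle : |slope (fun x => f (x, 0)) 0 b - g 0| ≤ ε / 2 := by
    refine le_of_tendsto (hlim.sub_const _).abs ?_
    filter_upwards [self_mem_nhdsWithin, mem_nhdsWithin_of_mem_nhds (Metric.ball_mem_nhds 0 hδ)]
      with y hy hyδ
    exact (hslope b hb hb0 hbδ y hy (by simpa using hyδ)).le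
  rw [Real.dist_eq]
  linarith

end QuadrantSlope

/-- "Jump of the jump vanishes" (paper's Lemma 2), y-axis version:
the jump of ∂f/∂x across the y-axis is continuous through the origin. -/
theorem jump_of_jump_vanishes_x
    (U : Set (ℝ × ℝ)) (hU : IsOpen U) (h0 : ((0 : ℝ), (0 : ℝ)) ∈ U)
    (f : ℝ × ℝ → ℝ) (hf : ContinuousOn f U)
    (gI gII gIII gIV : ℝ × ℝ → ℝ)
    (hgI : ContinuousOn gI (closure {p : ℝ × ℝ | 0 < p.1 ∧ 0 < p.2} ∩ U))
    (hdI : ∀ p ∈ {p : ℝ × ℝ | 0 < p.1 ∧ 0 < p.2} ∩ U,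
      HasDerivAt (fun t : ℝ => f (t, p.2)) (gI p) p.1)
    (hgII : ContinuousOn gII (closure {p : ℝ × ℝ | p.1 < 0 ∧ 0 < p.2} ∩ U))
    (hdII : ∀ p ∈ {p : ℝ × ℝ | p.1 < 0 ∧ 0 < p.2} ∩ U,
      HasDerivAt (fun t : ℝ => f (t, p.2)) (gII p) p.1)
    (hgIII : ContinuousOn gIII (closure {p : ℝ × ℝ | p.1 < 0 ∧ p.2 < 0} ∩ U))
    (hdIII : ∀ p ∈ {p : ℝ × ℝ | p.1 < 0 ∧ p.2 < 0} ∩ U,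
      HasDerivAt (fun t : ℝ => f (t, p.2)) (gIII p) p.1)
    (hgIV : ContinuousOn gIV (closure {p : ℝ × ℝ | 0 < p.1 ∧ p.2 < 0} ∩ U))
    (hdIV : ∀ p ∈ {p : ℝ × ℝ | 0 < p.1 ∧ p.2 < 0} ∩ U,
      HasDerivAt (fun t : ℝ => f (t, p.2)) (gIV p) p.1) :
    gI (0, 0) - gII (0, 0) = gIV (0, 0) - gIII (0, 0) := by
  have hU0 : U ∈ 𝓝 0 := hU.mem_nhds h0
  have hI := hasDerivWithinAt_of_continuousOn_closure_prod (s := Ioi 0) (t := Ioi 0) hU0 hf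
    (fun _ hb => uIoo_subset_Ioi hb) hgI hdI
  have hIV := hasDerivWithinAt_of_continuousOn_closure_prod (s := Ioi 0) (t := Iio 0) hU0 hf
    (fun _ hb => uIoo_subset_Ioi hb) hgIV hdIV
  have hII := hasDerivWithinAt_of_continuousOn_closure_prod (s := Iio 0) (t := Ioi 0) hU0 hf
    (fun _ hb => uIoo_subset_Iio hb) hgII hdII
  have hIII := hasDerivWithinAt_of_continuousOn_closure_prod (s := Iio 0) (t := Iio 0) hU0 hf
    (fun _ hb => uIoo_subset_Iio hb) hgIII hdIII
  exact congr_arg₂ (· - ·) ((uniqueDiffWithinAt_Ioi 0).eq_deriv _ hI hIV)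
    ((uniqueDiffWithinAt_Iio 0).eq_deriv _ hII hIII)
end

section
/- Let κ : ℝ → ℝ satisfy: for every y > −1, κ(y) > 0 and (κ(y) − 1)·exp(κ(y)) = y. Let m > 0 and let u, v be reals with u·v < 1, and set r := 2m·κ(−u·v) (so r > 0). Then the function t ↦ log( (2m·κ(−t·v))² ), defined for t with t·v < 1, is differentiable at t = u with derivative d = −(8m²v/r²)·exp(−r/(2m)), and this derivative satisfies (u/(4m))·d = (r − 2m)/r². -/
/-!
κ is a right inverse of the strictly increasing map `x ↦ (x - 1) eˣ` on `(0, ∞)`, whose derivative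
`x eˣ` is positive there; hence κ is monotone with open image, so continuous, and the inverse
function theorem gives `κ'(y) = 1 / (κ(y) e^{κ(y)})`. The chain rule then yields
`∂ₜ log r² = -2v / (x² eˣ)` with `x = κ(-uv) = r / (2m)`, and multiplying by `u / (4m)` and using
`-uv = (x - 1) eˣ` leaves `(x - 1) / (2m x²) = (r - 2m) / r²`.
-/

open Real Set Filter Topology

theorem hasDerivAt_sub_one_mul_exp (x : ℝ) :
    HasDerivAt (fun x => (x - 1) * exp x) (x * exp x) x :=
  (((hasDerivAt_id' x).sub_const 1).fun_mul (hasDerivAt_exp x)).congr_deriv (by ring)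

theorem strictMonoOn_sub_one_mul_exp : StrictMonoOn (fun x : ℝ => (x - 1) * exp x) (Ici 0) :=
  strictMonoOn_of_deriv_pos (convex_Ici 0) (by fun_prop) fun x hx => by
    rw [interior_Ici] at hx
    rw [(hasDerivAt_sub_one_mul_exp x).deriv]
    exact mul_pos hx (exp_pos x)

theorem StrictMonoOn.continuousAt_rightInverse {α β : Type*} [LinearOrder α] [TopologicalSpace α]
    [OrderTopology α] [DenselyOrdered α] [LinearOrder β] [TopologicalSpace β] [OrderTopology β]
    {f : α → β} {g : β → α} {s : Set β} {t : Set α} {y : β}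
    (hf : StrictMonoOn f t) (ht : IsOpen t) (hft : MapsTo f t s) (hgs : MapsTo g s t)
    (hfg : ∀ y ∈ s, f (g y) = y) (hs : s ∈ 𝓝 y) : ContinuousAt g y := by
  have hmono : MonotoneOn g s := fun y₁ hy₁ y₂ hy₂ hle => by
    by_contra! hlt
    have := hf (hgs hy₂) (hgs hy₁) hlt
    rw [hfg y₁ hy₁, hfg y₂ hy₂] at this
    exact hle.not_gt this
  have himage : g '' s = t := by
    refine (mapsTo_iff_image_subset.mp hgs).antisymm fun x hx => ⟨f x, hft hx, ?_⟩
    exact hf.injOn (hgs (hft hx)) hx (hfg _ (hft hx))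
  refine continuousAt_of_monotoneOn_of_image_mem_nhds hmono hs ?_
  rw [himage]
  exact ht.mem_nhds (hgs (mem_of_mem_nhds hs))

section Kruskal

variable {κ : ℝ → ℝ} (hκ : ∀ y : ℝ, -1 < y → 0 < κ y ∧ (κ y - 1) * exp (κ y) = y)
include hκ

theorem continuousAt_kruskal {y : ℝ} (hy : -1 < y) : ContinuousAt κ y := by
  refine (strictMonoOn_sub_one_mul_exp.mono Ioi_subset_Ici_self).continuousAt_rightInverse
    isOpen_Ioi (s := Ioi (-1)) (fun x hx => ?_) (fun y hy => (hκ y hy).1) (fun y hy => (hκ y hy).2)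
    (Ioi_mem_nhds hy)
  simpa using strictMonoOn_sub_one_mul_exp self_mem_Ici (Ioi_subset_Ici_self hx) hx

theorem hasDerivAt_kruskal {y : ℝ} (hy : -1 < y) :
    HasDerivAt κ (κ y * exp (κ y))⁻¹ y :=
  HasDerivAt.of_local_left_inverse (continuousAt_kruskal hκ hy)
    (hasDerivAt_sub_one_mul_exp (κ y)) (mul_pos (hκ y hy).1 (exp_pos _)).ne'
    (eventually_of_mem (Ioi_mem_nhds hy) fun y hy => (hκ y hy).2)

theorem hasDerivAt_log_sq_kruskal {c u v : ℝ} (hc : c ≠ 0) (huv : u * v < 1) :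
    HasDerivAt (fun t => log ((c * κ (-(t * v))) ^ 2))
      (-(2 * v) / (κ (-(u * v)) ^ 2 * exp (κ (-(u * v))))) u := by
  have hy : -1 < -(u * v) := by linarith
  have hx := (hκ _ hy).1
  have hinner : HasDerivAt (fun t => -(t * v)) (-v) u := (hasDerivAt_mul_const v).fun_neg
  have hr := (((hasDerivAt_kruskal hκ hy).comp u hinner).const_mul c).fun_pow 2
  refine (hr.log (by simp [hc, hx.ne'])).congr_deriv ?_
  simp only [Function.comp_apply]
  field_simp
  ring

end Kruskal

/-- In Kruskal–Szekeres coordinates with area radius r = 2m·κ(−uv), the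
transversal derivative of ln λ along ∂_u satisfies
(u/(4m))·∂_u log(r²) = (r − 2m)/r² (the paper's computation Y(ln λ) = (r−2m)/r²). -/
theorem kruskal_Y_log_lambda (κ : ℝ → ℝ)
    (hκ : ∀ y : ℝ, -1 < y → 0 < κ y ∧ (κ y - 1) * Real.exp (κ y) = y)
    (m u v : ℝ) (hm : 0 < m) (huv : u * v < 1) :
    ∀ r : ℝ, r = 2 * m * κ (-(u * v)) →
      0 < r ∧
      HasDerivAt (fun t : ℝ => Real.log ((2 * m * κ (-(t * v))) ^ 2))
        (-(8 * m ^ 2 * v / r ^ 2) * Real.exp (-(r / (2 * m)))) u ∧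
      u / (4 * m) * (-(8 * m ^ 2 * v / r ^ 2) * Real.exp (-(r / (2 * m)))) =
        (r - 2 * m) / r ^ 2 := by
  rintro r rfl
  obtain ⟨hx, hxeq⟩ := hκ (-(u * v)) (by linarith)
  set x := κ (-(u * v))
  have hexp : exp (-(2 * m * x / (2 * m))) = (exp x)⁻¹ := by
    rw [mul_div_cancel_left₀ x (by positivity), exp_neg]
  have hderiv : -(8 * m ^ 2 * v / (2 * m * x) ^ 2) * exp (-(2 * m * x / (2 * m))) =
      -(2 * v) / (x ^ 2 * exp x) := by
    rw [hexp]
    field_simp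
    ring
  refine ⟨by positivity, hderiv ▸ hasDerivAt_log_sq_kruskal hκ (by positivity) huv, ?_⟩
  rw [hderiv]
  field_simp
  linear_combination (-4) * hxeq
end
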